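/- arXiv:2510.23623 — 8 statements merged into one kernel-verified Lean document; each statement's English description precedes it below -/
import Mathlib

section
/- Let d ≥ 2 be an even integer, let f_0, …, f_d and χ be real numbers, and suppose the Dehn–Sommerville relations hold: h_{d+1-n} - h_n = (-1)^n · binom(d+1, n) · (χ - 2) for all 0 ≤ n ≤ d+1. Then χ = ∑_{n=0}^{d} β_n f_n. -/
open Finset

/-- `β n = 4 (2^{n+2} - 1) B_{n+2} / (n+2)`, with `bernoulli` Mathlib's Bernoulli
numbers (convention `B_1 = -1/2`). -/
noncomputable def beta (n : ℕ) : ℝ :=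
  4 * (2 ^ (n + 2) - 1) * ((bernoulli (n + 2) : ℚ) : ℝ) / (n + 2)

noncomputable def betaQ (n : ℕ) : ℚ :=
  4 * (2 ^ (n + 2) - 1) * bernoulli (n + 2) / (n + 2)

namespace EulerAux

open PowerSeries

noncomputable abbrev E : ℚ⟦X⟧ := PowerSeries.exp ℚ
noncomputable abbrev Bps : ℚ⟦X⟧ := bernoulliPowerSeries ℚ
noncomputable def Cps : ℚ⟦X⟧ := PowerSeries.rescale 2 Bps - Bps
noncomputable def Sps : ℚ⟦X⟧ := PowerSeries.mk fun n => PowerSeries.coeff (n+1) Cps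
noncomputable def Gps : ℚ⟦X⟧ := PowerSeries.mk fun n => betaQ n / n.factorial

lemma coeff_E (n : ℕ) : coeff n E = 1 / n.factorial := by
  simp [PowerSeries.coeff_exp]

lemma coeff_B (n : ℕ) : coeff n Bps = bernoulli n / n.factorial := by
  simp [bernoulliPowerSeries]

lemma coeff_Cps (n : ℕ) : coeff n Cps = (2 ^ n - 1) * bernoulli n / n.factorial := by
  simp [Cps, PowerSeries.coeff_rescale, coeff_B]
  ring

lemma X_mul_Sps : (X : ℚ⟦X⟧) * Sps = Cps := by
  ext k
  cases k with
  | zero => simp [coeff_zero_X_mul, coeff_Cps]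
  | succ n => simp [coeff_succ_X_mul, Sps]

lemma E_sub_one_ne : E - 1 ≠ 0 := by
  intro hc
  have := congrArg (coeff 1) hc
  simp [coeff_E] at this

lemma E_add_one_ne : E + 1 ≠ 0 := by
  intro hc
  have := congrArg (PowerSeries.constantCoeff (R := ℚ)) hc
  simp [PowerSeries.exp] at this

lemma rescale_two_X : PowerSeries.rescale (2:ℚ) X = PowerSeries.C (R := ℚ) 2 * X := by
  ext n
  simp only [PowerSeries.coeff_rescale, PowerSeries.coeff_X, PowerSeries.coeff_C_mul]
  split_ifs with h <;> simp [h]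

lemma rescale_two_E : PowerSeries.rescale (2:ℚ) E = E * E := by
  have h := (PowerSeries.exp_pow_eq_rescale_exp (A := ℚ) 2).symm
  norm_num at h
  rw [h, sq]

lemma hCE : Cps * (E + 1) = -X := by
  have hB : Bps * (E - 1) = X := bernoulliPowerSeries_mul_exp_sub_one ℚ
  have hB2 : PowerSeries.rescale (2:ℚ) Bps * (E * E - 1) = PowerSeries.C (R := ℚ) 2 * X := by
    have := congrArg (PowerSeries.rescale (2:ℚ)) hB
    rw [map_mul, map_sub, map_one, rescale_two_E, rescale_two_X] at this
    exact this
  have key : (Cps * (E + 1)) * (E - 1) = (-X) * (E - 1) := by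
    have : Cps * (E + 1) * (E - 1) = PowerSeries.rescale (2:ℚ) Bps * (E * E - 1)
        - (Bps * (E - 1)) * (E + 1) := by
      rw [Cps]; ring
    rw [this, hB2, hB]
    have h2 : (PowerSeries.C (R := ℚ) 2 : ℚ⟦X⟧) = 2 := by
      simp [← map_one (PowerSeries.C (R := ℚ)), ← map_ofNat (PowerSeries.C (R := ℚ)) 2]
    rw [h2]; ring
  exact mul_right_cancel₀ E_sub_one_ne key

lemma hSE : Sps * (E + 1) = -1 := by
  have : (X : ℚ⟦X⟧) * (Sps * (E + 1)) = X * (-1) := by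
    rw [← mul_assoc, X_mul_Sps, hCE]; ring
  exact mul_left_cancel₀ PowerSeries.X_ne_zero this

lemma dE : d⁄dX ℚ E = E := by
  ext n
  rw [PowerSeries.coeff_derivative, coeff_E, coeff_E, Nat.factorial_succ]
  have h1 : ((n+1 : ℕ) : ℚ) ≠ 0 := by positivity
  have h2 : ((n.factorial : ℕ) : ℚ) ≠ 0 := by positivity
  push_cast
  field_simp

lemma dS_rel : d⁄dX ℚ Sps * (E + 1) + Sps * E = 0 := by
  have h := congrArg (d⁄dX ℚ) hSE
  rw [Derivation.leibniz, map_add, dE, Derivation.map_one_eq_zero] at h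
  simp only [smul_eq_mul, add_zero, map_neg, Derivation.map_one_eq_zero, neg_zero] at h
  linear_combination h

lemma G_eq : Gps = PowerSeries.C (R := ℚ) 4 * d⁄dX ℚ Sps := by
  ext n
  rw [Gps, PowerSeries.coeff_mk, PowerSeries.coeff_C_mul, PowerSeries.coeff_derivative,
    Sps, PowerSeries.coeff_mk, coeff_Cps, betaQ]
  have h2 : ((n+2 : ℕ) : ℚ) ≠ 0 := by positivity
  have hf : ((n.factorial : ℕ) : ℚ) ≠ 0 := by positivity
  have hfs : (((n+2).factorial : ℕ) : ℚ) = (n+2) * ((n+1) * n.factorial) := by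
    rw [Nat.factorial_succ, Nat.factorial_succ]; push_cast; ring
  field_simp [hfs]
  rw [show n + 1 + 1 = n + 2 from rfl, hfs]
  ring

lemma hGE : Gps * ((E + 1) * (E + 1)) = PowerSeries.C (R := ℚ) 4 * E := by
  have h1 : d⁄dX ℚ Sps * ((E + 1) * (E + 1)) = E := by
    have : d⁄dX ℚ Sps * (E + 1) = -(Sps * E) := by linear_combination dS_rel
    calc d⁄dX ℚ Sps * ((E + 1) * (E + 1)) = (d⁄dX ℚ Sps * (E + 1)) * (E + 1) := by ring
    _ = -(Sps * (E+1)) * E := by rw [this]; ring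
    _ = E := by rw [hSE]; ring
  rw [G_eq]
  calc PowerSeries.C (R := ℚ) 4 * d⁄dX ℚ Sps * ((E + 1) * (E + 1))
      = PowerSeries.C (R := ℚ) 4 * (d⁄dX ℚ Sps * ((E + 1) * (E + 1))) := by ring
  _ = PowerSeries.C (R := ℚ) 4 * E := by rw [h1]

lemma key : E * Gps + (E + 1) * d⁄dX ℚ Gps = Gps := by
  apply mul_right_cancel₀ E_add_one_ne
  have hdiff := congrArg (d⁄dX ℚ) hGE
  simp only [Derivation.leibniz, smul_eq_mul, map_add, dE, Derivation.map_one_eq_zero,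
    add_zero, PowerSeries.derivative_C, mul_zero, zero_add, zero_mul, add_zero] at hdiff
  linear_combination hdiff - hGE

lemma dEG : d⁄dX ℚ (E * Gps) = Gps - d⁄dX ℚ Gps := by
  rw [Derivation.leibniz, smul_eq_mul, smul_eq_mul, dE]
  linear_combination key

lemma Isum (n : ℕ) :
    ∑ i ∈ range (n+2), ((n+1).choose i : ℚ) * betaQ i = betaQ n - betaQ (n+1) := by
  have h := congrArg (PowerSeries.coeff n) dEG
  rw [PowerSeries.coeff_derivative, PowerSeries.coeff_mul,
    Finset.Nat.sum_antidiagonal_eq_sum_range_succ_mk, map_sub, PowerSeries.coeff_derivative] at h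
  simp only [coeff_E, Gps, PowerSeries.coeff_mk] at h
  have hn1 : ((n:ℚ) + 1) ≠ 0 := by positivity
  have hnf : ((n.factorial : ℕ) : ℚ) ≠ 0 := by positivity
  have h' : ∑ j ∈ range (n+2),
      (((n+1).factorial : ℚ)) * (1 / j.factorial * (betaQ (n+1-j) / (n+1-j).factorial))
      = betaQ n - betaQ (n+1) := by
    rw [← Finset.mul_sum]
    have hfs : (((n+1).factorial : ℕ) : ℚ) = (n+1) * n.factorial := by
      rw [Nat.factorial_succ]; push_cast; ring
    rw [hfs]
    calc ((n:ℚ)+1) * n.factorial * ∑ i ∈ range (n+2),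
          1 / i.factorial * (betaQ (n+1-i) / (n+1-i).factorial)
        = (n.factorial : ℚ) * ((∑ i ∈ range (n+2),
          1 / i.factorial * (betaQ (n+1-i) / (n+1-i).factorial)) * (n+1)) := by ring
      _ = (n.factorial : ℚ) * (betaQ n / n.factorial - betaQ (n+1) / (n+1).factorial * (n+1)) := by
          rw [h]
      _ = betaQ n - betaQ (n+1) := by
          rw [hfs]; field_simp
  rw [← Finset.sum_range_reflect]
  rw [← h']
  apply Finset.sum_congr rfl
  intro j hj
  rw [Finset.mem_range] at hj
  have hj1 : j ≤ n + 1 := by omega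
  have e1 : n + 2 - 1 - j = n + 1 - j := by omega
  have e2 : n + 1 - (n + 1 - j) = j := by omega
  rw [e1, Nat.cast_choose ℚ (Nat.sub_le _ _), e2]
  ring

lemma betaQ_odd {n : ℕ} (hn : Odd n) : betaQ n = 0 := by
  have : bernoulli (n + 2) = 0 := by
    rw [bernoulli_eq_bernoulli'_of_ne_one (by omega)]
    exact bernoulli'_eq_zero_of_odd (by obtain ⟨k, rfl⟩ := hn; exact ⟨k+1, by ring⟩) (by omega)
  simp [betaQ, this]

lemma betaQ_zero : betaQ 0 = 1 := by
  have : bernoulli 2 = 1/6 := by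
    rw [bernoulli_eq_bernoulli'_of_ne_one (by omega), bernoulli'_two]
  norm_num [betaQ, this]

lemma beta_eq (n : ℕ) : beta n = ((betaQ n : ℚ) : ℝ) := by
  rw [beta, betaQ]; push_cast; ring

lemma beta_odd {n : ℕ} (hn : Odd n) : beta n = 0 := by
  rw [beta_eq, betaQ_odd hn]; norm_num

lemma beta_zero : beta 0 = 1 := by
  rw [beta_eq, betaQ_zero]; norm_num

lemma Isum_real (n : ℕ) :
    ∑ i ∈ range (n+2), ((n+1).choose i : ℝ) * beta i = beta n - beta (n+1) := by
  have h := Isum n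
  have := congrArg (fun q : ℚ => (q : ℝ)) h
  push_cast at this
  simpa [beta_eq] using this

/-- the combined Bernoulli identity -/
lemma key_beta (n : ℕ) :
    (-1 : ℝ)^n * ∑ i ∈ range (n+2), ((n+1).choose i : ℝ) * beta i - beta (n+1) = beta n := by
  rw [Isum_real]
  rcases Nat.even_or_odd n with he | ho
  · rw [he.neg_one_pow, beta_odd he.add_one]
    ring
  · rw [ho.neg_one_pow, beta_odd ho]
    ring

end EulerAux

namespace EulerAux

lemma coeff_term (d n : ℕ) (hn : n ≤ d) :
    ∑ k ∈ range (d + 2), beta (d + 1 - k)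
      * (Polynomial.X ^ (d - n) *
          (Polynomial.C ((-1:ℝ)^n) * (Polynomial.X + 1) ^ (n + 1) - 1)).coeff k
    = beta n := by
  have hcoeff : ∀ k, (Polynomial.X ^ (d - n) *
      (Polynomial.C ((-1:ℝ)^n) * (Polynomial.X + 1) ^ (n + 1) - 1)).coeff k
      = if d - n ≤ k then
          ((-1:ℝ)^n * (((n+1).choose (k - (d-n)) : ℕ) : ℝ)
            - if k - (d-n) = 0 then 1 else 0)
        else 0 := by
    intro k
    rw [mul_comm, Polynomial.coeff_mul_X_pow']
    rcases le_or_gt (d - n) k with h1 | h1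
    · rw [if_pos h1, if_pos h1, Polynomial.coeff_sub, Polynomial.coeff_C_mul,
        Polynomial.coeff_X_add_one_pow, Polynomial.coeff_one]
    · rw [if_neg (by omega), if_neg (by omega)]
  simp only [hcoeff]
  rw [Finset.range_eq_Ico,
    ← Finset.sum_Ico_consecutive _ (Nat.zero_le (d-n)) (by omega : d - n ≤ d + 2)]
  have hzero : ∑ k ∈ Finset.Ico 0 (d-n), beta (d+1-k) *
      (if d - n ≤ k then
        ((-1:ℝ)^n * (((n+1).choose (k - (d-n)) : ℕ) : ℝ) - if k - (d-n) = 0 then 1 else 0)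
       else 0) = 0 := by
    apply Finset.sum_eq_zero
    intro k hk
    rw [Finset.mem_Ico] at hk
    rw [if_neg (by omega)]
    ring
  rw [hzero, zero_add, Finset.sum_Ico_eq_sum_range]
  have hrange : d + 2 - (d - n) = n + 2 := by omega
  rw [hrange]
  have hterm : ∀ j ∈ range (n + 2),
      beta (d + 1 - (d - n + j)) *
        (if d - n ≤ d - n + j then
          ((-1:ℝ)^n * (((n+1).choose ((d - n + j) - (d-n)) : ℕ) : ℝ)
            - if (d - n + j) - (d-n) = 0 then 1 else 0)
         else 0)
      = (-1:ℝ)^n * ((((n+1).choose j : ℕ) : ℝ) * beta (n + 1 - j))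
          - (if j = 0 then beta (n+1) else 0) := by
    intro j hj
    rw [Finset.mem_range] at hj
    have e1 : d + 1 - (d - n + j) = n + 1 - j := by omega
    have e2 : (d - n + j) - (d - n) = j := by omega
    rw [if_pos (by omega), e1, e2]
    split_ifs with h0
    · subst h0; simp; ring
    · ring
  rw [Finset.sum_congr rfl hterm, Finset.sum_sub_distrib, ← Finset.mul_sum]
  have hite : ∑ j ∈ range (n + 2), (if j = 0 then beta (n+1) else 0) = beta (n+1) := by
    rw [Finset.sum_ite_eq' (range (n+2)) 0 (fun _ => beta (n+1))]
    simp
  rw [hite]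
  have hrefl : ∑ j ∈ range (n + 2), (((n+1).choose j : ℕ) : ℝ) * beta (n + 1 - j)
      = ∑ i ∈ range (n + 2), (((n+1).choose i : ℕ) : ℝ) * beta i := by
    rw [← Finset.sum_range_reflect]
    apply Finset.sum_congr rfl
    intro i hi
    rw [Finset.mem_range] at hi
    have e1 : n + 2 - 1 - i = n + 1 - i := by omega
    rw [e1, Nat.choose_symm (by omega)]
    have e3 : n + 1 - (n + 1 - i) = i := by omega
    rw [e3]
  rw [hrefl]
  exact key_beta n

lemma star_eval (d : ℕ) (hde : Even d) (f : ℕ → ℝ) (χ : ℝ) (h : ℕ → ℝ) (F : ℝ → ℝ)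
    (hF : ∀ x : ℝ, F x = x ^ (d + 1) + ∑ n ∈ range (d + 1), f n * x ^ (d - n))
    (hh : ∀ x : ℝ, F (x - 1) = ∑ n ∈ range (d + 2), h n * x ^ (d + 1 - n))
    (hDS : ∀ n ≤ d + 1,
      h (d + 1 - n) - h n = (-1 : ℝ) ^ n * ((d + 1).choose n : ℝ) * (χ - 2))
    {x : ℝ} (hx : x ≠ -1) :
    ∑ n ∈ range (d + 1), f n * (x ^ (d - n) * ((-1 : ℝ)^n * (x + 1)^(n+1) - 1))
      = χ * x ^ (d + 1) := by
  have hu0 : x + 1 ≠ 0 := fun hc => hx (by linarith)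
  have hoddd : Odd (d + 1) := hde.add_one
  have hA : F x = ∑ n ∈ range (d + 2), h n * (x + 1) ^ (d + 1 - n) := by
    have := hh (x + 1)
    rwa [add_sub_cancel_right] at this
  have hx1 : (x + 1) * (1 / (x + 1) - 1) = -x := by
    rw [mul_sub, mul_one_div_cancel hu0]
    ring
  have hB : (x + 1) ^ (d + 1) * F (1 / (x + 1) - 1)
      = ∑ n ∈ range (d + 2), h n * (x + 1) ^ n := by
    rw [hh (1 / (x + 1)), Finset.mul_sum]
    apply Finset.sum_congr rfl
    intro n hn
    rw [Finset.mem_range] at hn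
    have hp : (x + 1) ^ (d + 1) = (x + 1) ^ n * (x + 1) ^ (d + 1 - n) := by
      rw [← pow_add]; congr 1; omega
    calc (x + 1) ^ (d + 1) * (h n * (1 / (x + 1)) ^ (d + 1 - n))
        = h n * (x + 1) ^ n * (((x + 1) * (1 / (x + 1))) ^ (d + 1 - n)) := by
          rw [hp, mul_pow]; ring
      _ = h n * (x + 1) ^ n := by
          rw [mul_one_div_cancel hu0, one_pow, mul_one]
  have hrefl : ∑ n ∈ range (d + 2), h n * (x + 1) ^ (d + 1 - n)
      = ∑ n ∈ range (d + 2), h (d + 1 - n) * (x + 1) ^ n := by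
    rw [← Finset.sum_range_reflect]
    apply Finset.sum_congr rfl
    intro j hj
    rw [Finset.mem_range] at hj
    have e1 : d + 2 - 1 - j = d + 1 - j := by omega
    rw [e1]
    have e2 : d + 1 - (d + 1 - j) = j := by omega
    rw [e2]
  have hbin : ∑ n ∈ range (d + 2), ((d+1).choose n : ℝ) * ((-1)^n * (x + 1) ^ n)
      = (1 - (x + 1))^(d+1) := by
    have hb := add_pow (-(x+1)) 1 (d + 1)
    simp only [one_pow, mul_one] at hb
    have : (1 - (x+1)) = (-(x+1) + 1) := by ring
    rw [this, hb]
    apply Finset.sum_congr rfl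
    intro k _
    rw [neg_pow (x + 1)]
    ring
  have hDSsum : ∑ n ∈ range (d + 2), (h (d + 1 - n) - h n) * (x + 1) ^ n
      = (χ - 2) * (1 - (x + 1))^(d+1) := by
    rw [← hbin, Finset.mul_sum]
    apply Finset.sum_congr rfl
    intro n hn
    rw [Finset.mem_range] at hn
    rw [hDS n (by omega)]
    ring
  have hmain : F x - (x + 1) ^ (d + 1) * F (1 / (x + 1) - 1)
      = (χ - 2) * (1 - (x + 1))^(d+1) := by
    rw [hA, hB, hrefl, ← hDSsum, ← Finset.sum_sub_distrib]
    apply Finset.sum_congr rfl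
    intro n _
    ring
  have hFt : (x + 1) ^ (d + 1) * F (1 / (x + 1) - 1)
      = -x^(d+1) + ∑ n ∈ range (d + 1), f n * ((-1:ℝ)^n * ((x+1)^(n+1) * x^(d-n))) := by
    rw [hF (1 / (x + 1) - 1), mul_add, Finset.mul_sum]
    congr 1
    · rw [← mul_pow, hx1]
      exact hoddd.neg_pow x
    · apply Finset.sum_congr rfl
      intro n hn
      rw [Finset.mem_range] at hn
      have hsplit : d + 1 = (n + 1) + (d - n) := by omega
      have hsgn : (-1:ℝ)^(d-n) = (-1)^n := by
        have e : (d - n) + n = d := by omega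
        have h1 : (-1:ℝ)^(d-n) * (-1)^n = 1 := by
          rw [← pow_add, e]; exact hde.neg_one_pow
        have h2 : (-1:ℝ)^n * (-1)^n = 1 := by
          rw [← pow_add]; exact Even.neg_one_pow ⟨n, rfl⟩
        calc (-1:ℝ)^(d-n) = (-1)^(d-n) * ((-1)^n * (-1)^n) := by rw [h2, mul_one]
          _ = ((-1)^(d-n) * (-1)^n) * (-1)^n := by ring
          _ = (-1)^n := by rw [h1, one_mul]
      have hp : (x + 1) ^ (d + 1) = (x + 1) ^ (n + 1) * (x + 1) ^ (d - n) := by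
        rw [← pow_add, show n + 1 + (d - n) = d + 1 from by omega]
      calc (x + 1)^(d+1) * (f n * (1 / (x + 1) - 1)^(d-n))
          = f n * ((x+1)^(n+1) * (((x + 1) * (1 / (x + 1) - 1))^(d-n))) := by
            rw [hp, mul_pow]; ring
        _ = f n * ((x+1)^(n+1) * ((-1)^(d-n) * x^(d-n))) := by rw [hx1, neg_pow]
        _ = f n * ((-1:ℝ)^n * ((x+1)^(n+1) * x^(d-n))) := by rw [hsgn]; ring
  have hlast : (1 - (x + 1))^(d+1) = -x^(d+1) := by
    have e : (1 - (x + 1)) = -x := by ring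
    rw [e]
    exact hoddd.neg_pow x
  have hmain' : (x^(d+1) + ∑ n ∈ range (d + 1), f n * x^(d-n))
      - (-x^(d+1) + ∑ n ∈ range (d + 1), f n * ((-1:ℝ)^n * ((x+1)^(n+1) * x^(d-n))))
      = (χ - 2) * (-x^(d+1)) := by
    rw [← hF x, ← hFt, ← hlast]
    exact hmain
  have hgoal : ∑ n ∈ range (d + 1), f n * (x ^ (d - n) * ((-1:ℝ)^n * (x+1)^(n+1) - 1))
      = (∑ n ∈ range (d + 1), f n * ((-1:ℝ)^n * ((x+1)^(n+1) * x^(d-n))))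
        - ∑ n ∈ range (d + 1), f n * x^(d-n) := by
    rw [← Finset.sum_sub_distrib]
    apply Finset.sum_congr rfl
    intro n _
    ring
  rw [hgoal]
  linear_combination -hmain'

end EulerAux

theorem euler_char_formula (d : ℕ) (hd2 : 2 ≤ d) (hde : Even d)
    (f : ℕ → ℝ) (χ : ℝ) (h : ℕ → ℝ) (F : ℝ → ℝ)
    (hF : ∀ x : ℝ, F x = x ^ (d + 1) + ∑ n ∈ range (d + 1), f n * x ^ (d - n))
    (hh : ∀ x : ℝ, F (x - 1) = ∑ n ∈ range (d + 2), h n * x ^ (d + 1 - n))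
    (hDS : ∀ n ≤ d + 1,
      h (d + 1 - n) - h n = (-1 : ℝ) ^ n * ((d + 1).choose n : ℝ) * (χ - 2)) :
    χ = ∑ n ∈ range (d + 1), beta n * f n := by
  classical
  set P : Polynomial ℝ := ∑ n ∈ range (d + 1),
      Polynomial.C (f n) * (Polynomial.X ^ (d - n) *
        (Polynomial.C ((-1:ℝ)^n) * (Polynomial.X + 1) ^ (n + 1) - 1)) with hPdef
  set Q : Polynomial ℝ := Polynomial.C χ * Polynomial.X ^ (d + 1) with hQdef
  have hPQ : P = Q := by
    apply Polynomial.eq_of_infinite_eval_eq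
    apply Set.Infinite.mono (s := {(-1:ℝ)}ᶜ)
    swap
    · exact (Set.finite_singleton _).infinite_compl
    · intro x hx
      have hx' : x ≠ -1 := hx
      simp only [Set.mem_setOf_eq, hPdef, hQdef]
      rw [Polynomial.eval_finset_sum]
      have hev : ∀ n ∈ range (d + 1),
          (Polynomial.C (f n) * (Polynomial.X ^ (d - n) *
            (Polynomial.C ((-1:ℝ)^n) * (Polynomial.X + 1) ^ (n + 1) - 1))).eval x
          = f n * (x ^ (d - n) * ((-1:ℝ)^n * (x + 1)^(n+1) - 1)) := by
        intro n _
        simp [Polynomial.eval_mul, Polynomial.eval_pow]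
      rw [Finset.sum_congr rfl hev,
        EulerAux.star_eval d hde f χ h F hF hh hDS hx']
      simp [Polynomial.eval_mul, Polynomial.eval_pow]
  have hR : ∑ k ∈ range (d + 2), beta (d + 1 - k) * Q.coeff k = χ := by
    have hc : ∀ k, Q.coeff k = if k = d + 1 then χ else 0 := by
      intro k
      rw [hQdef, Polynomial.coeff_C_mul, Polynomial.coeff_X_pow]
      split_ifs <;> simp
    rw [Finset.sum_congr rfl (fun k _ => by rw [hc k])]
    rw [Finset.sum_eq_single (d + 1)]
    · rw [if_pos rfl, Nat.sub_self, EulerAux.beta_zero, one_mul]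
    · intro b _ hb
      rw [if_neg hb, mul_zero]
    · intro hmem
      exact absurd (Finset.self_mem_range_succ (d+1)) hmem
  have hL : ∑ k ∈ range (d + 2), beta (d + 1 - k) * P.coeff k
      = ∑ n ∈ range (d + 1), beta n * f n := by
    have hPc : ∀ k, P.coeff k = ∑ n ∈ range (d + 1), f n *
        (Polynomial.X ^ (d - n) *
          (Polynomial.C ((-1:ℝ)^n) * (Polynomial.X + 1) ^ (n + 1) - 1)).coeff k := by
      intro k
      rw [hPdef, Polynomial.finset_sum_coeff]
      exact Finset.sum_congr rfl fun n _ => by rw [Polynomial.coeff_C_mul]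
    calc ∑ k ∈ range (d + 2), beta (d + 1 - k) * P.coeff k
        = ∑ k ∈ range (d + 2), ∑ n ∈ range (d + 1),
            f n * (beta (d + 1 - k) * (Polynomial.X ^ (d - n) *
              (Polynomial.C ((-1:ℝ)^n) * (Polynomial.X + 1) ^ (n + 1) - 1)).coeff k) := by
          apply Finset.sum_congr rfl
          intro k _
          rw [hPc k, Finset.mul_sum]
          exact Finset.sum_congr rfl fun n _ => by ring
      _ = ∑ n ∈ range (d + 1), ∑ k ∈ range (d + 2),
            f n * (beta (d + 1 - k) * (Polynomial.X ^ (d - n) *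
              (Polynomial.C ((-1:ℝ)^n) * (Polynomial.X + 1) ^ (n + 1) - 1)).coeff k) :=
          Finset.sum_comm
      _ = ∑ n ∈ range (d + 1), f n * beta n := by
          apply Finset.sum_congr rfl
          intro n hn
          rw [Finset.mem_range] at hn
          rw [← Finset.mul_sum, EulerAux.coeff_term d n (by omega)]
      _ = ∑ n ∈ range (d + 1), beta n * f n := by
          exact Finset.sum_congr rfl fun n _ => by ring
  rw [← hR, ← hPQ, hL]
end

section
/- Let d ≥ 2 be an even integer, let f_0, …, f_d and χ be real numbers, and suppose the Dehn–Sommerville relations hold: h_{d+1-n} - h_n = (-1)^n · binom(d+1, n) · (χ - 2) for all 0 ≤ n ≤ d+1. Then χ = ∑_{m=0}^{d/2} β_{2m} f_{2m}; that is, the Euler characteristic is determined by the even-dimensional face numbers alone, with coefficients β_{2m} = 4(2^{2m+2} - 1) B_{2m+2} / (2m+2) that do not depend on d. -/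
open Finset

open PowerSeries

noncomputable def AA : PowerSeries ℚ := 2 * (PowerSeries.exp ℚ + 1)⁻¹

lemma hA : (PowerSeries.exp ℚ + 1) * AA = 2 := by
  rw [AA, mul_comm 2, ← mul_assoc, PowerSeries.mul_inv_cancel, one_mul]
  simp

lemma exp_sq : PowerSeries.exp ℚ * PowerSeries.exp ℚ = rescale (2:ℚ) (PowerSeries.exp ℚ) := by
  have := PowerSeries.exp_mul_exp_eq_exp_add (1:ℚ) 1
  norm_num [rescale_one] at this
  exact this

lemma two_eq_C : (2 : PowerSeries ℚ) = PowerSeries.C 2 := by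
  simp [map_ofNat]

lemma rescale_two_X : rescale (2:ℚ) (PowerSeries.X) = 2 * PowerSeries.X := by
  ext n
  rw [two_eq_C]
  by_cases hn : n = 1 <;>
    simp [PowerSeries.coeff_rescale, PowerSeries.coeff_X, hn]

lemma hXA : (PowerSeries.X : PowerSeries ℚ) * AA
    = 2 * (bernoulliPowerSeries ℚ - rescale (2:ℚ) (bernoulliPowerSeries ℚ)) := by
  have hd : ((PowerSeries.exp ℚ - 1) * (PowerSeries.exp ℚ + 1)) ≠ 0 := by
    apply mul_ne_zero
    · intro hc
      have := congrArg (PowerSeries.coeff 1) hc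
      simp [PowerSeries.coeff_exp] at this
    · intro hc
      have := congrArg (PowerSeries.constantCoeff) hc
      simp at this
  apply mul_right_cancel₀ hd
  have hB := bernoulliPowerSeries_mul_exp_sub_one ℚ
  have hB2 : rescale (2:ℚ) (bernoulliPowerSeries ℚ) * (rescale (2:ℚ) (PowerSeries.exp ℚ) - 1)
      = 2 * PowerSeries.X := by
    have := congrArg (rescale (2:ℚ)) hB
    rw [map_mul, map_sub, map_one] at this
    rw [this, rescale_two_X]
  have hsq : (PowerSeries.exp ℚ - 1) * (PowerSeries.exp ℚ + 1)
      = rescale (2:ℚ) (PowerSeries.exp ℚ) - 1 := by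
    rw [← exp_sq]; ring
  calc PowerSeries.X * AA * ((PowerSeries.exp ℚ - 1) * (PowerSeries.exp ℚ + 1))
      = PowerSeries.X * (PowerSeries.exp ℚ - 1) * ((PowerSeries.exp ℚ + 1) * AA) := by ring
    _ = 2 * (PowerSeries.X * (PowerSeries.exp ℚ + 1) - 2 * PowerSeries.X) := by rw [hA]; ring
    _ = 2 * (bernoulliPowerSeries ℚ * (PowerSeries.exp ℚ - 1) * (PowerSeries.exp ℚ + 1)
          - rescale (2:ℚ) (bernoulliPowerSeries ℚ) * (rescale (2:ℚ) (PowerSeries.exp ℚ) - 1)) := by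
        rw [hB, hB2]
    _ = 2 * (bernoulliPowerSeries ℚ - rescale (2:ℚ) (bernoulliPowerSeries ℚ))
          * ((PowerSeries.exp ℚ - 1) * (PowerSeries.exp ℚ + 1)) := by
        rw [← hsq]; ring

noncomputable def aQ (k : ℕ) : ℚ := k.factorial * PowerSeries.coeff k AA

lemma aQ_eq (M : ℕ) : aQ M = 2 * (1 - 2^(M+1)) * bernoulli (M+1) / (M+1) := by
  have h := congrArg (PowerSeries.coeff (M+1)) hXA
  rw [PowerSeries.coeff_succ_X_mul, two_eq_C, PowerSeries.coeff_C_mul, map_sub,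
    PowerSeries.coeff_rescale] at h
  simp only [bernoulliPowerSeries, PowerSeries.coeff_mk, Algebra.algebraMap_self,
    RingHom.id_apply] at h
  rw [aQ, h]
  have hfac : ((M+1).factorial : ℚ) ≠ 0 := by exact_mod_cast (M+1).factorial_ne_zero
  have hM1 : ((M:ℚ) + 1) ≠ 0 := by positivity
  rw [Nat.factorial_succ]
  push_cast
  field_simp
lemma sum_aQ (M : ℕ) (hM : 1 ≤ M) :
    ∑ k ∈ range (M+1), (M.choose k : ℚ) * aQ k = - aQ M := by
  have h2 : PowerSeries.exp ℚ * AA = 2 - AA := by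
    have := hA; linear_combination this
  have h := congrArg (PowerSeries.coeff M) h2
  rw [map_sub, two_eq_C, PowerSeries.coeff_C, if_neg (by omega), zero_sub,
    PowerSeries.coeff_mul, Nat.sum_antidiagonal_eq_sum_range_succ_mk] at h
  have key : ∑ k ∈ range (M+1), (M.choose k : ℚ) * aQ (M - k) = - aQ M := by
    have := congrArg (fun q => (M.factorial : ℚ) * q) h
    simp only [Finset.mul_sum] at this
    rw [aQ]
    calc ∑ k ∈ range (M+1), (M.choose k : ℚ) * aQ (M - k)
        = ∑ k ∈ range (M+1), (M.factorial : ℚ) *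
            (PowerSeries.coeff k (PowerSeries.exp ℚ) * PowerSeries.coeff (M-k) AA) := by
          apply Finset.sum_congr rfl
          intro k hk
          rw [Finset.mem_range] at hk
          have hkM : k ≤ M := by omega
          rw [PowerSeries.coeff_exp, aQ]
          have hcf := Nat.choose_mul_factorial_mul_factorial hkM
          have : (M.choose k : ℚ) * k.factorial * (M-k).factorial = M.factorial := by
            exact_mod_cast congrArg (Nat.cast : ℕ → ℚ) hcf
          have hk0 : (k.factorial : ℚ) ≠ 0 := by exact_mod_cast k.factorial_ne_zero
          simp only [Algebra.algebraMap_self, RingHom.id_apply]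
          field_simp
          linear_combination PowerSeries.coeff (M-k) AA * this
        _ = (M.factorial : ℚ) * ∑ k ∈ range (M+1),
            PowerSeries.coeff k (PowerSeries.exp ℚ) * PowerSeries.coeff (M-k) AA := by
          rw [Finset.mul_sum]
        _ = - ((M.factorial : ℚ) * PowerSeries.coeff M AA) := by rw [h]; ring
  calc ∑ k ∈ range (M+1), (M.choose k : ℚ) * aQ k
      = ∑ k ∈ range (M+1), (M.choose (M - k) : ℚ) * aQ (M - (M - k)) := by
        apply Finset.sum_congr rfl
        intro k hk
        rw [Finset.mem_range] at hk
        rw [Nat.choose_symm (by omega), Nat.sub_sub_self (by omega)]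
      _ = ∑ k ∈ range (M+1), (M.choose k : ℚ) * aQ (M - k) := by
        have := Finset.sum_range_reflect (fun j => (M.choose j : ℚ) * aQ (M - j)) (M+1)
        simpa using this
      _ = - aQ M := key
noncomputable def ar (k : ℕ) : ℝ := ((aQ k : ℚ) : ℝ)

lemma ar0 : ar 0 = 1 := by
  rw [ar, aQ_eq]
  norm_num [bernoulli_one]

lemma beta_eq (n : ℕ) : beta n = -2 * ar (n+1) := by
  rw [ar, aQ_eq, beta]
  push_cast
  ring

lemma sum_ar (M : ℕ) (hM : 1 ≤ M) :
    ∑ k ∈ range (M+1), (M.choose k : ℝ) * ar k = - ar M := by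
  have hq := congrArg (Rat.cast : ℚ → ℝ) (sum_aQ M hM)
  push_cast at hq
  simpa [ar] using hq

lemma even_filter_sum (G : ℕ → ℝ) (k : ℕ) :
    ∑ n ∈ range (2*k+1), (if Even n then G n else 0) = ∑ m ∈ range (k+1), G (2*m) := by
  induction k with
  | zero => simp
  | succ k ih =>
    have h1 : 2*(k+1)+1 = (2*k+1) + 1 + 1 := by ring
    rw [h1, Finset.sum_range_succ, Finset.sum_range_succ, ih]
    have ho : ¬ Even (2*k+1) := by simp [Nat.even_add_one]
    have he : Even (2*k+1+1) := by simp [Nat.even_add_one, ho]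
    rw [if_neg ho, if_pos he, show 2*k+1+1 = 2*(k+1) by ring,
      Finset.sum_range_succ (fun m => G (2*m)) (k+1)]
    ring

lemma master_identity (d : ℕ) (hde : Even d)
    (f : ℕ → ℝ) (χ : ℝ) (h : ℕ → ℝ) (F : ℝ → ℝ)
    (hF : ∀ x : ℝ, F x = x ^ (d + 1) + ∑ n ∈ range (d + 1), f n * x ^ (d - n))
    (hh : ∀ x : ℝ, F (x - 1) = ∑ n ∈ range (d + 2), h n * x ^ (d + 1 - n))
    (hDS : ∀ n ≤ d + 1,
      h (d + 1 - n) - h n = (-1 : ℝ) ^ n * ((d + 1).choose n : ℝ) * (χ - 2)) :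
    ∀ x : ℝ, x ≠ 0 →
      ∑ n ∈ range (d+1), f n * (x^(n+1) * (1-x)^(d-n) - (x-1)^(d-n))
        = χ * (x-1)^(d+1) := by
  intro x hx
  have E2 : x^(d+1) * F (x⁻¹ - 1) = ∑ k ∈ range (d+2), h k * x^k := by
    rw [hh x⁻¹, Finset.mul_sum]
    apply Finset.sum_congr rfl
    intro k hk
    rw [Finset.mem_range] at hk
    have hsplit : x^(d+1) = x^k * x^(d+1-k) := by
      rw [← pow_add]; congr 1; omega
    rw [hsplit, inv_pow]
    field_simp
  have E3 : ∑ k ∈ range (d+2), h k * x^k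
      = ∑ k ∈ range (d+2), h (d+1-k) * x^(d+1-k) := by
    have := Finset.sum_range_reflect (fun k => h k * x^k) (d+2)
    simpa using this.symm
  have binom : (x-1)^(d+1)
      = ∑ k ∈ range (d+2), (-1:ℝ)^k * ((d+1).choose k : ℝ) * x^(d+1-k) := by
    have hap := add_pow x (-1 : ℝ) (d+1)
    have hrefl := Finset.sum_range_reflect
      (fun k => x ^ k * (-1:ℝ) ^ (d + 1 - k) * ((d+1).choose k : ℝ)) (d+2)
    calc (x-1)^(d+1) = (x + (-1))^(d+1) := by ring
      _ = ∑ k ∈ range (d+2), x ^ k * (-1:ℝ) ^ (d + 1 - k) * ((d+1).choose k : ℝ) := hap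
      _ = ∑ k ∈ range (d+2),
            x ^ (d+1-k) * (-1:ℝ) ^ (d + 1 - (d+1-k)) * ((d+1).choose (d+1-k) : ℝ) := by
          rw [← hrefl]
          apply Finset.sum_congr rfl
          intro k hk
          rw [Finset.mem_range] at hk
          congr 3 <;> omega
      _ = ∑ k ∈ range (d+2), (-1:ℝ)^k * ((d+1).choose k : ℝ) * x^(d+1-k) := by
          apply Finset.sum_congr rfl
          intro k hk
          rw [Finset.mem_range] at hk
          rw [Nat.sub_sub_self (by omega), Nat.choose_symm (show k ≤ d+1 by omega)]
          ring
  have E4 : x^(d+1) * F (x⁻¹ - 1) - F (x-1) = (χ - 2) * (x-1)^(d+1) := by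
    rw [E2, E3, hh x, ← Finset.sum_sub_distrib, binom, Finset.mul_sum]
    apply Finset.sum_congr rfl
    intro k hk
    rw [Finset.mem_range] at hk
    rw [← sub_mul, hDS k (by omega)]
    ring
  have hF1 : F (x - 1) = (x-1)^(d+1) + ∑ n ∈ range (d+1), f n * (x-1)^(d-n) := by
    rw [hF (x-1)]
  have hux : x * (x⁻¹ - 1) = 1 - x := by field_simp
  have hF2 : x^(d+1) * F (x⁻¹ - 1)
      = (1-x)^(d+1) + ∑ n ∈ range (d+1), f n * (x^(n+1) * (1-x)^(d-n)) := by
    rw [hF (x⁻¹-1), mul_add, Finset.mul_sum]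
    congr 1
    · rw [← mul_pow, hux]
    · apply Finset.sum_congr rfl
      intro n hn
      rw [Finset.mem_range] at hn
      have hsplit : x^(d+1) = x^(n+1) * x^(d-n) := by
        rw [← pow_add]; congr 1; omega
      rw [hsplit, ← hux, mul_pow]
      ring
  have hodd : (1-x:ℝ)^(d+1) = -((x-1)^(d+1)) := by
    have h1 : (1-x:ℝ) = -(x-1) := by ring
    rw [h1, Odd.neg_pow (Even.add_one hde)]
  rw [hF1, hF2, hodd] at E4
  have goal2 : ∑ n ∈ range (d+1), f n * (x^(n+1) * (1-x)^(d-n) - (x-1)^(d-n))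
      = (∑ n ∈ range (d+1), f n * (x^(n+1) * (1-x)^(d-n)))
        - ∑ n ∈ range (d+1), f n * (x-1)^(d-n) := by
    rw [← Finset.sum_sub_distrib]
    apply Finset.sum_congr rfl
    intro n _
    ring
  rw [goal2]
  linarith [E4]


lemma key_u (d : ℕ) (hde : Even d) (f : ℕ → ℝ) (χ : ℝ)
    (master : ∀ x : ℝ, x ≠ 0 →
      ∑ n ∈ range (d+1), f n * (x^(n+1) * (1-x)^(d-n) - (x-1)^(d-n))
        = χ * (x-1)^(d+1)) :
    ∀ u : ℝ, u ≠ 0 → u ≠ -1 →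
      ∑ n ∈ range (d+1), f n * ((-1:ℝ)^n * (1+u)^(n+1) - u^(n+1)) = χ := by
  intro u hu hu1
  have hu1' : 1 + u ≠ 0 := by intro hc; apply hu1; linarith
  have hx : (1 + u)/u ≠ 0 := div_ne_zero hu1' hu
  set x := (1+u)/u with hxdef
  have hx1 : x - 1 = u⁻¹ := by rw [hxdef]; field_simp; ring
  have hx2 : (1:ℝ) - x = -u⁻¹ := by rw [← neg_sub, hx1]
  have hxv : x = (1+u) * u⁻¹ := by rw [hxdef, div_eq_mul_inv]
  have hm := master x hx
  calc ∑ n ∈ range (d+1), f n * ((-1:ℝ)^n * (1+u)^(n+1) - u^(n+1))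
      = u^(d+1) * ∑ n ∈ range (d+1),
          f n * (x^(n+1) * (1-x)^(d-n) - (x-1)^(d-n)) := by
        rw [Finset.mul_sum]
        apply Finset.sum_congr rfl
        intro n hn
        rw [Finset.mem_range] at hn
        have hpar : (-1:ℝ)^(d-n) = (-1:ℝ)^n := by
          have h1 : (-1:ℝ)^(d-n) * (-1:ℝ)^n = 1 := by
            rw [← pow_add, show d - n + n = d by omega, hde.neg_one_pow]
          have h2 : ((-1:ℝ)^n) * ((-1:ℝ)^n) = 1 := by
            rcases Nat.even_or_odd n with he | ho
            · rw [he.neg_one_pow]; norm_num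
            · rw [ho.neg_one_pow]; norm_num
          linear_combination (-1:ℝ)^n * h1 - (-1:ℝ)^(d-n) * h2
        rw [hx1, hx2, hxv, mul_pow, neg_pow (u⁻¹) (d-n), hpar,
          show d + 1 = (n+1) + (d-n) by omega, pow_add, inv_pow]
        have hdn : (u^(d-n)) ≠ 0 := pow_ne_zero _ hu
        have hn1 : (u^(n+1)) ≠ 0 := pow_ne_zero _ hu
        field_simp
        have hinv : u^(d-n) * u⁻¹^(d-n) = 1 := by rw [← mul_pow, mul_inv_cancel₀ hu, one_pow]
        linear_combination (-(f n * u * u ^ n * (-1) ^ n * (1 + u) ^ n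
          + f n * u ^ 2 * u ^ n * (-1) ^ n * (1 + u) ^ n - f n * u ^ 2 * u ^ (n * 2))) * hinv
    _ = u^(d+1) * (χ * (x-1)^(d+1)) := by rw [hm]
    _ = χ := by
        rw [hx1, inv_pow]
        field_simp


theorem euler_char_even_faces (d : ℕ) (hd2 : 2 ≤ d) (hde : Even d)
    (f : ℕ → ℝ) (χ : ℝ) (h : ℕ → ℝ) (F : ℝ → ℝ)
    (hF : ∀ x : ℝ, F x = x ^ (d + 1) + ∑ n ∈ range (d + 1), f n * x ^ (d - n))
    (hh : ∀ x : ℝ, F (x - 1) = ∑ n ∈ range (d + 2), h n * x ^ (d + 1 - n))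
    (hDS : ∀ n ≤ d + 1,
      h (d + 1 - n) - h n = (-1 : ℝ) ^ n * ((d + 1).choose n : ℝ) * (χ - 2)) :
    χ = ∑ m ∈ range (d / 2 + 1), beta (2 * m) * f (2 * m) := by
  have keyu := key_u d hde f χ (master_identity d hde f χ h F hF hh hDS)
  set P : Polynomial ℝ := ∑ n ∈ range (d+1), Polynomial.C (f n) *
      (Polynomial.C ((-1:ℝ)^n) * (1 + Polynomial.X)^(n+1) - Polynomial.X^(n+1)) with hPdef
  have hPev : ∀ u : ℝ, u ≠ 0 → u ≠ -1 → P.eval u = χ := by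
    intro u hu hu1
    rw [hPdef, Polynomial.eval_finset_sum]
    rw [← keyu u hu hu1]
    apply Finset.sum_congr rfl
    intro n _
    simp
  have hP : P = Polynomial.C χ := by
    have hroot : (P - Polynomial.C χ) = 0 := by
      apply Polynomial.eq_zero_of_infinite_isRoot
      have hfin : ({0, -1} : Set ℝ).Finite := (Set.finite_singleton (-1:ℝ)).insert 0
      apply Set.Infinite.mono (s := ({0, -1} : Set ℝ)ᶜ)
      · intro u hu
        simp only [Set.mem_compl_iff, Set.mem_insert_iff, Set.mem_singleton_iff, not_or] at hu
        simp [Polynomial.IsRoot, hPev u hu.1 hu.2]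
      · exact Set.Finite.infinite_compl hfin
    linear_combination (norm := ring_nf) hroot
  have hcoeff : ∀ k : ℕ, (Polynomial.C χ).coeff k
      = ∑ n ∈ range (d+1), f n *
          ((-1:ℝ)^n * ((n+1).choose k : ℝ) - (if k = n+1 then 1 else 0)) := by
    intro k
    rw [← hP, hPdef, Polynomial.finset_sum_coeff]
    apply Finset.sum_congr rfl
    intro n _
    rw [Polynomial.coeff_C_mul, Polynomial.coeff_sub, Polynomial.coeff_C_mul,
      Polynomial.coeff_one_add_X_pow, Polynomial.coeff_X_pow]
  calc χ = ∑ k ∈ range (d+2), (Polynomial.C χ).coeff k * ar k := by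
        rw [Finset.sum_eq_single_of_mem 0 (Finset.mem_range.mpr (by omega))]
        · rw [Polynomial.coeff_C_zero, ar0, mul_one]
        · intro b _ hb
          rw [Polynomial.coeff_C, if_neg hb, zero_mul]
    _ = ∑ k ∈ range (d+2), (∑ n ∈ range (d+1), f n *
          ((-1:ℝ)^n * ((n+1).choose k : ℝ) - (if k = n+1 then 1 else 0))) * ar k := by
        apply Finset.sum_congr rfl
        intro k _
        rw [hcoeff k]
    _ = ∑ n ∈ range (d+1), ∑ k ∈ range (d+2), (f n *
          ((-1:ℝ)^n * ((n+1).choose k : ℝ) - (if k = n+1 then 1 else 0))) * ar k := by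
        rw [Finset.sum_comm]
        apply Finset.sum_congr rfl
        intro k _
        rw [Finset.sum_mul]
    _ = ∑ n ∈ range (d+1), (if Even n then beta n * f n else 0) := by
        apply Finset.sum_congr rfl
        intro n hn
        rw [Finset.mem_range] at hn
        have e1 : ∑ k ∈ range (d+2), (if k = n+1 then (1:ℝ) else 0) * ar k = ar (n+1) := by
          rw [Finset.sum_eq_single_of_mem (n+1) (Finset.mem_range.mpr (by omega))]
          · rw [if_pos rfl, one_mul]
          · intro b _ hb
            rw [if_neg hb, zero_mul]
        have e2 : ∑ k ∈ range (d+2), ((n+1).choose k : ℝ) * ar k = - ar (n+1) := by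
          rw [← Finset.sum_subset (Finset.range_subset_range.mpr (show n+1+1 ≤ d+2 by omega))
            (fun x _ hx => by
              rw [Finset.mem_range, not_lt] at hx
              rw [Nat.choose_eq_zero_of_lt (by omega), Nat.cast_zero, zero_mul])]
          exact sum_ar (n+1) (by omega)
        calc ∑ k ∈ range (d+2), (f n *
              ((-1:ℝ)^n * ((n+1).choose k : ℝ) - (if k = n+1 then 1 else 0))) * ar k
            = f n * ∑ k ∈ range (d+2), ((-1:ℝ)^n * (((n+1).choose k : ℝ) * ar k)
                - (if k = n+1 then (1:ℝ) else 0) * ar k) := by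
              rw [Finset.mul_sum]
              apply Finset.sum_congr rfl
              intro k _
              ring
          _ = f n * ((-1:ℝ)^n * ∑ k ∈ range (d+2), ((n+1).choose k : ℝ) * ar k
                - ∑ k ∈ range (d+2), (if k = n+1 then (1:ℝ) else 0) * ar k) := by
              rw [Finset.sum_sub_distrib, ← Finset.mul_sum]
          _ = (if Even n then beta n * f n else 0) := by
              rw [e1, e2]
              rcases Nat.even_or_odd n with he | ho
              · rw [if_pos he, he.neg_one_pow, beta_eq]
                ring
              · rw [if_neg (Nat.not_even_iff_odd.mpr ho), ho.neg_one_pow]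
                ring
    _ = ∑ m ∈ range (d / 2 + 1), beta (2 * m) * f (2 * m) := by
        obtain ⟨c, hc⟩ := hde
        have hdc : d / 2 = c := by omega
        rw [hdc, show d + 1 = 2 * c + 1 by omega]
        exact even_filter_sum (fun n => beta n * f n) c
end

section
/- Let d ≥ 1 be an integer, f_0, …, f_d real numbers, and c ∈ ℝ. Then the relations h_{d+1-n} - h_n = (-1)^n · binom(d+1, n) · c hold for all 0 ≤ n ≤ d+1 if and only if the identity x^{d+1} · F((1-x)/x) - F(x-1) = c · (x-1)^{d+1} holds for all real x ≠ 0. -/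
open Finset

lemma coeff_zero_of_vanish (d : ℕ) (a : ℕ → ℝ)
    (H : ∀ x : ℝ, x ≠ 0 → ∑ n ∈ range (d + 2), a n * x ^ n = 0) :
    ∀ n ≤ d + 1, a n = 0 := by
  intro n hn
  set P : Polynomial ℝ := ∑ k ∈ range (d + 2), Polynomial.C (a k) * Polynomial.X ^ k with hP
  have heval : ∀ x : ℝ, P.eval x = ∑ k ∈ range (d + 2), a k * x ^ k := by
    intro x
    simp [hP, Polynomial.eval_finset_sum]
  have hP0 : P = 0 := by
    apply Polynomial.eq_zero_of_infinite_isRoot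
    apply Set.Infinite.mono (s := {x : ℝ | x ≠ 0})
    · intro x hx
      simp only [Set.mem_setOf_eq, Polynomial.IsRoot.def]
      rw [heval]
      exact H x hx
    · have : ({0}ᶜ : Set ℝ).Infinite := Set.Finite.infinite_compl (Set.finite_singleton 0)
      exact this
  have : P.coeff n = a n := by
    rw [hP, Polynomial.finset_sum_coeff]
    rw [Finset.sum_eq_single n]
    · simp
    · intro b _ hb
      rw [Polynomial.coeff_C_mul, Polynomial.coeff_X_pow,
        if_neg (fun hnb => hb hnb.symm), mul_zero]
    · intro hmem
      exact absurd (mem_range.mpr (by omega)) hmem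
  rw [hP0] at this
  simpa using this.symm

theorem dehn_sommerville_polynomial_form (d : ℕ) (hd1 : 1 ≤ d)
    (f : ℕ → ℝ) (c : ℝ) (h : ℕ → ℝ) (F : ℝ → ℝ)
    (hF : ∀ x : ℝ, F x = x ^ (d + 1) + ∑ n ∈ range (d + 1), f n * x ^ (d - n))
    (hh : ∀ x : ℝ, F (x - 1) = ∑ n ∈ range (d + 2), h n * x ^ (d + 1 - n)) :
    (∀ n ≤ d + 1,
        h (d + 1 - n) - h n = (-1 : ℝ) ^ n * ((d + 1).choose n : ℝ) * c) ↔
      (∀ x : ℝ, x ≠ 0 →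
        x ^ (d + 1) * F ((1 - x) / x) - F (x - 1) = c * (x - 1) ^ (d + 1)) := by
  set a : ℕ → ℝ := fun n =>
    h n - h (d + 1 - n) - c * ((d + 1).choose n : ℝ) * (-1 : ℝ) ^ (d + 1 - n) with ha
  -- the key algebraic identity
  have key : ∀ x : ℝ, x ≠ 0 →
      x ^ (d + 1) * F ((1 - x) / x) - F (x - 1) - c * (x - 1) ^ (d + 1)
        = ∑ n ∈ range (d + 2), a n * x ^ n := by
    intro x hx
    have h1 : (1 - x) / x = 1 / x - 1 := by field_simp
    have e1 : x ^ (d + 1) * F ((1 - x) / x) = ∑ n ∈ range (d + 2), h n * x ^ n := by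
      rw [h1, hh (1 / x), Finset.mul_sum]
      apply Finset.sum_congr rfl
      intro n hn
      have hn' : n ≤ d + 1 := by simpa [Nat.lt_succ_iff] using mem_range.mp hn
      have hxpow : x ^ (d + 1) = x ^ n * x ^ (d + 1 - n) := by
        rw [← pow_add]; congr 1; omega
      have hx2 : x ^ (d + 1 - n) ≠ 0 := pow_ne_zero _ hx
      rw [hxpow, one_div, inv_pow]
      field_simp
    have e2 : F (x - 1) = ∑ n ∈ range (d + 2), h (d + 1 - n) * x ^ n := by
      rw [hh x, ← Finset.sum_range_reflect]
      apply Finset.sum_congr rfl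
      intro n hn
      have hn' : n ≤ d + 1 := by simpa [Nat.lt_succ_iff] using mem_range.mp hn
      have : d + 2 - 1 - n = d + 1 - n := by omega
      rw [this]
      congr 2
      omega
    have e3 : (x - 1) ^ (d + 1)
        = ∑ n ∈ range (d + 2), x ^ n * (-1 : ℝ) ^ (d + 1 - n) * ((d + 1).choose n : ℝ) := by
      have : x - 1 = x + (-1) := by ring
      rw [this, add_pow]
    rw [e1, e2, e3, Finset.mul_sum, ← Finset.sum_sub_distrib, ← Finset.sum_sub_distrib]
    apply Finset.sum_congr rfl
    intro n _
    simp only [ha]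
    ring
  constructor
  · intro hA x hx
    have hz : ∀ n ∈ range (d + 2), a n * x ^ n = 0 := by
      intro n hn
      have hn' : n ≤ d + 1 := by simpa [Nat.lt_succ_iff] using mem_range.mp hn
      have hm : d + 1 - n ≤ d + 1 := by omega
      have := hA (d + 1 - n) hm
      have hdd : d + 1 - (d + 1 - n) = n := by omega
      rw [hdd] at this
      have hch : (d + 1).choose (d + 1 - n) = (d + 1).choose n := Nat.choose_symm hn'
      rw [hch] at this
      have : a n = 0 := by
        simp only [ha]
        linarith [this]
      rw [this, zero_mul]
    have hsum : ∑ n ∈ range (d + 2), a n * x ^ n = 0 := Finset.sum_eq_zero hz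
    have := key x hx
    rw [hsum] at this
    linarith
  · intro hI n hn
    have H : ∀ x : ℝ, x ≠ 0 → ∑ k ∈ range (d + 2), a k * x ^ k = 0 := by
      intro x hx
      have := key x hx
      have h2 := hI x hx
      linarith
    have hz := coeff_zero_of_vanish d a H
    have h1 := hz (d + 1 - n) (by omega)
    simp only [ha] at h1
    have hdd : d + 1 - (d + 1 - n) = n := by omega
    rw [hdd] at h1
    have hch : (d + 1).choose (d + 1 - n) = (d + 1).choose n := Nat.choose_symm hn
    rw [hch] at h1
    have : h (d + 1 - n) - h n = c * ((d + 1).choose n : ℝ) * (-1 : ℝ) ^ n := by linarith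
    rw [this]; ring
end

section
/- Let d ≥ 2 be an even integer, let f_0, …, f_d and χ be real numbers with F(x) = x^{d+1} + ∑_{n=0}^{d} f_n x^{d-n}, and suppose that x^{d+1} · F((1-x)/x) - F(x-1) = (χ - 2) · (x-1)^{d+1} for all real x ≠ 0. Then the polynomial p(z) = χ/2 + ∑_{n=0}^{d} f_n z^{n+1} satisfies the identity p(z) + p(-1-z) = 0 for all z ∈ ℝ. -/
open Finset

theorem p_odd_symmetry_even_dim (d : ℕ) (hd2 : 2 ≤ d) (hde : Even d)
    (f : ℕ → ℝ) (χ : ℝ) (F : ℝ → ℝ)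
    (hF : ∀ x : ℝ, F x = x ^ (d + 1) + ∑ n ∈ range (d + 1), f n * x ^ (d - n))
    (hDS : ∀ x : ℝ, x ≠ 0 →
      x ^ (d + 1) * F ((1 - x) / x) - F (x - 1) = (χ - 2) * (x - 1) ^ (d + 1)) :
    ∀ z : ℝ,
      (χ / 2 + ∑ n ∈ range (d + 1), f n * z ^ (n + 1)) +
        (χ / 2 + ∑ n ∈ range (d + 1), f n * (-1 - z) ^ (n + 1)) = 0 := by
  -- key lemma: for y ≠ 0, y^(d+1) * F(1/y) = 1 + ∑ f n * y^(n+1)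
  have key : ∀ y : ℝ, y ≠ 0 →
      y ^ (d + 1) * F (1 / y) = 1 + ∑ n ∈ range (d + 1), f n * y ^ (n + 1) := by
    intro y hy
    rw [hF, mul_add, mul_sum]
    congr 1
    · field_simp
      rw [← mul_pow, mul_one_div_cancel hy, one_pow]
    · refine Finset.sum_congr rfl fun n hn => ?_
      have hn' : n ≤ d := by simpa using Nat.lt_succ_iff.mp (mem_range.mp hn)
      have hsplit : d + 1 = (d - n) + (n + 1) := by omega
      rw [hsplit, pow_add]
      field_simp
      ring
      rw [mul_comm (y ^ (d - n)), mul_assoc, ← mul_pow, mul_inv_cancel₀ hy, one_pow, mul_one]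
  -- the odd power fact
  have hodd : Odd (d + 1) := Even.add_one hde
  -- main identity away from w = 0 and w = -1
  have main : ∀ w : ℝ, w ≠ 0 → w + 1 ≠ 0 →
      (χ / 2 + ∑ n ∈ range (d + 1), f n * w ^ (n + 1)) +
        (χ / 2 + ∑ n ∈ range (d + 1), f n * (-1 - w) ^ (n + 1)) = 0 := by
    intro w hw hw1
    have hx : (w / (w + 1)) ≠ 0 := div_ne_zero hw hw1
    have h := hDS (w / (w + 1)) hx
    have e1 : (1 - w / (w + 1)) / (w / (w + 1)) = 1 / w := by
      field_simp
      ring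
    have hne : (-1 - w) ≠ 0 := by intro hc; apply hw1; linarith [hc]
    have e2 : w / (w + 1) - 1 = 1 / (-1 - w) := by
      field_simp
      ring
    rw [e1, e2] at h
    have hA := key w hw
    have hB := key (-1 - w) hne
    have hpow : (w / (w + 1)) ^ (d + 1) = w ^ (d + 1) / (w + 1) ^ (d + 1) := div_pow _ _ _
    have hneg : (-1 - w) ^ (d + 1) = -((w + 1) ^ (d + 1)) := by
      have : (-1 - w) = -(w + 1) := by ring
      rw [this, hodd.neg_pow]
    have hw1p : (w + 1) ^ (d + 1) ≠ 0 := pow_ne_zero _ hw1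
    -- from h: w^(d+1) F(1/w) / (w+1)^(d+1) - F(1/(-1-w)) = (χ-2)*(1/(-1-w))^(d+1)
    have h2 : w ^ (d + 1) * F (1 / w) - (w + 1) ^ (d + 1) * F (1 / (-1 - w))
        = (χ - 2) * (w + 1) ^ (d + 1) * (1 / (-1 - w)) ^ (d + 1) := by
      have := congrArg (fun t => t * (w + 1) ^ (d + 1)) h
      simp only [hpow] at this
      field_simp at this ⊢
      linarith [this]
    have hrhs : (χ - 2) * (w + 1) ^ (d + 1) * (1 / (-1 - w)) ^ (d + 1) = -(χ - 2) := by
      rw [div_pow, one_pow, hneg]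
      field_simp
    have hFB : (w + 1) ^ (d + 1) * F (1 / (-1 - w))
        = -(1 + ∑ n ∈ range (d + 1), f n * (-1 - w) ^ (n + 1)) := by
      rw [← hB, hneg]; ring
    rw [hrhs, hA, hFB] at h2
    linarith [h2]
  -- extend to all reals by continuity
  intro z
  have hdense : Dense (({0, -1} : Set ℝ)ᶜ) := by
    apply Set.Countable.dense_compl ℝ
    exact (Set.toFinite _).countable
  have hcont : Continuous (fun w : ℝ =>
      (χ / 2 + ∑ n ∈ range (d + 1), f n * w ^ (n + 1)) +
        (χ / 2 + ∑ n ∈ range (d + 1), f n * (-1 - w) ^ (n + 1))) := by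
    fun_prop
  have heq : (fun w : ℝ =>
      (χ / 2 + ∑ n ∈ range (d + 1), f n * w ^ (n + 1)) +
        (χ / 2 + ∑ n ∈ range (d + 1), f n * (-1 - w) ^ (n + 1))) = fun _ => (0 : ℝ) := by
    apply Continuous.ext_on hdense hcont continuous_const
    intro w hw
    simp only [Set.mem_compl_iff, Set.mem_insert_iff, Set.mem_singleton_iff, not_or] at hw
    exact main w hw.1 (by intro hc; exact hw.2 (by linarith))
  exact congrFun heq z
end

section
/- Let d ≥ 1 be an odd integer, let f_0, …, f_d be real numbers with F(x) = x^{d+1} + ∑_{n=0}^{d} f_n x^{d-n}, and suppose that x^{d+1} · F((1-x)/x) - F(x-1) = 0 for all real x ≠ 0. Then the polynomial p(z) = ∑_{n=0}^{d} f_n z^{n+1} satisfies the identity p(z) - p(-1-z) = 0 for all z ∈ ℝ. -/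
open Finset

theorem p_even_symmetry_odd_dim (d : ℕ) (hd1 : 1 ≤ d) (hdo : Odd d)
    (f : ℕ → ℝ) (F : ℝ → ℝ)
    (hF : ∀ x : ℝ, F x = x ^ (d + 1) + ∑ n ∈ range (d + 1), f n * x ^ (d - n))
    (hDS : ∀ x : ℝ, x ≠ 0 →
      x ^ (d + 1) * F ((1 - x) / x) - F (x - 1) = 0) :
    ∀ z : ℝ,
      (∑ n ∈ range (d + 1), f n * z ^ (n + 1)) -
        (∑ n ∈ range (d + 1), f n * (-1 - z) ^ (n + 1)) = 0 := by
  have heven : Even (d + 1) := hdo.add_one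
  -- main claim away from 0 and -1
  have key : ∀ z : ℝ, z ≠ 0 → z ≠ -1 →
      (∑ n ∈ range (d + 1), f n * z ^ (n + 1)) -
        (∑ n ∈ range (d + 1), f n * (-1 - z) ^ (n + 1)) = 0 := by
    intro z hz0 hz1
    have hz1' : (1 + z) ≠ 0 := by
      intro h; apply hz1; linarith
    have hw : (-1 - z) ≠ 0 := by
      intro h; apply hz1; linarith
    set x : ℝ := z / (1 + z) with hxdef
    have hx : x ≠ 0 := div_ne_zero hz0 hz1'
    have h1x : (1 - x) / x = z⁻¹ := by
      field_simp [hxdef]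
      rw [hxdef]
      field_simp
      ring
    have h2x : x - 1 = (-1 - z)⁻¹ := by
      rw [hxdef]
      field_simp
      ring
    have hE := hDS x hx
    rw [hF, hF, h1x, h2x] at hE
    have hs1 : ∑ n ∈ range (d + 1), f n * (z⁻¹) ^ (d - n)
        = (∑ n ∈ range (d + 1), f n * z ^ (n + 1)) / z ^ (d + 1) := by
      rw [Finset.sum_div]
      refine Finset.sum_congr rfl ?_
      intro n hn
      have hn' : n ≤ d := by
        have := Finset.mem_range.mp hn; omega
      have hsplit : z ^ (d + 1) = z ^ (d - n) * z ^ (n + 1) := by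
        rw [← pow_add]; congr 1; omega
      rw [inv_pow, hsplit]
      field_simp
    have hs2 : ∑ n ∈ range (d + 1), f n * ((-1 - z)⁻¹) ^ (d - n)
        = (∑ n ∈ range (d + 1), f n * (-1 - z) ^ (n + 1)) / (-1 - z) ^ (d + 1) := by
      rw [Finset.sum_div]
      refine Finset.sum_congr rfl ?_
      intro n hn
      have hn' : n ≤ d := by
        have := Finset.mem_range.mp hn; omega
      have hsplit : (-1 - z) ^ (d + 1) = (-1 - z) ^ (d - n) * (-1 - z) ^ (n + 1) := by
        rw [← pow_add]; congr 1; omega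
      rw [inv_pow, hsplit]
      field_simp
    rw [hs1, hs2] at hE
    set A := ∑ n ∈ range (d + 1), f n * z ^ (n + 1) with hA
    set B := ∑ n ∈ range (d + 1), f n * (-1 - z) ^ (n + 1) with hB
    have hneg : (-1 - z) ^ (d + 1) = (1 + z) ^ (d + 1) := by
      have : (-1 - z) = -(1 + z) := by ring
      rw [this, heven.neg_pow]
    rw [hxdef, hneg] at hE
    have hzp : (z : ℝ) ^ (d + 1) ≠ 0 := pow_ne_zero _ hz0
    have hzp1 : (1 + z : ℝ) ^ (d + 1) ≠ 0 := pow_ne_zero _ hz1'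
    rw [div_pow, inv_pow, inv_pow] at hE
    field_simp at hE
    rw [hneg] at hE
    have hP : z ^ (d + 1) * ((1 + z) ^ (d + 1) * (1 + z) ^ (d + 1)) ≠ 0 :=
      mul_ne_zero hzp (mul_ne_zero hzp1 hzp1)
    have h3 : (A - B) * (z ^ (d + 1) * ((1 + z) ^ (d + 1) * (1 + z) ^ (d + 1))) = 0 := by
      linear_combination z ^ (d + 1) * (1 + z) ^ (d + 1) * hE
    exact (mul_eq_zero.mp h3).resolve_right hP
  -- extend to all of ℝ by continuity
  intro z
  have hc : Continuous (fun z : ℝ =>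
      (∑ n ∈ range (d + 1), f n * z ^ (n + 1)) -
        (∑ n ∈ range (d + 1), f n * (-1 - z) ^ (n + 1))) := by
    fun_prop
  have hdense : Dense (({0, -1} : Set ℝ)ᶜ) :=
    Set.Countable.dense_compl ℝ (((Set.finite_singleton (-1:ℝ)).insert 0).countable)
  have := Continuous.ext_on hdense hc continuous_const
    (fun y hy => by
      simp only [Set.mem_compl_iff, Set.mem_insert_iff, Set.mem_singleton_iff, not_or] at hy
      exact key y hy.1 hy.2)
  exact congrFun this z
end

section
/- Every polynomial P ∈ ℝ[z] admits a decomposition P = p + q where p satisfies p(z) + p(-1-z) = 0 and q is even (q(-z) = q(z)), and this decomposition is unique. -/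
open Polynomial

lemma exists_decomp : ∀ n (P : ℝ[X]), P.natDegree ≤ n →
    ∃ p q : ℝ[X], P = p + q ∧ p + p.comp (-1 - X) = 0 ∧ q.comp (-X) = q := by
  intro n
  induction n with
  | zero =>
    intro P hP
    refine ⟨0, P, by ring, by simp, ?_⟩
    rw [Polynomial.eq_C_of_natDegree_le_zero hP]
    simp
  | succ n ih =>
    intro P hP
    by_cases h : P.natDegree ≤ n
    · exact ih P h
    push_neg at h
    have hN : P.natDegree = n + 1 := le_antisymm hP h
    have hP0 : P ≠ 0 := fun h0 => by simp [h0] at hN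
    have ha : P.leadingCoeff ≠ 0 := leadingCoeff_ne_zero.mpr hP0
    set a := P.leadingCoeff with ha_def
    have key : ∀ M : ℝ[X], M.natDegree = n + 1 → M.leadingCoeff = a →
        (P - M).natDegree ≤ n := by
      intro M hMdeg hMlc
      by_cases h0 : P - M = 0
      · simp [h0]
      have hM0 : M ≠ 0 := fun hh => by simp [hh] at hMdeg
      have hdlt : (P - M).degree < P.degree := by
        apply degree_sub_lt _ hP0 hMlc.symm
        rw [degree_eq_natDegree hP0, degree_eq_natDegree hM0, hMdeg, hN]
      have := natDegree_lt_natDegree h0 hdlt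
      omega
    rcases Nat.even_or_odd (n + 1) with he | ho
    · -- even: M = C a * X^(n+1)
      set M : ℝ[X] := C a * X ^ (n + 1) with hM
      have hMdeg : M.natDegree = n + 1 := by
        rw [hM, natDegree_C_mul_X_pow _ _ ha]
      have hMlc : M.leadingCoeff = a := by
        rw [hM, leadingCoeff_mul, leadingCoeff_pow, leadingCoeff_X, leadingCoeff_C]
        ring
      obtain ⟨p, q, h1, h2, h3⟩ := ih (P - M) (key M hMdeg hMlc)
      refine ⟨p, q + M, ?_, h2, ?_⟩
      · rw [← add_assoc, ← h1]; ring
      · rw [add_comp, h3, hM, mul_comp, C_comp, pow_comp, X_comp, he.neg_pow]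
    · -- odd: M = C a * (X + C (1/2))^(n+1)
      set M : ℝ[X] := C a * (X + C (1/2)) ^ (n + 1) with hM
      have hmon : ((X : ℝ[X]) + C (1/2)).Monic := monic_X_add_C _
      have hMdeg : M.natDegree = n + 1 := by
        rw [hM, natDegree_C_mul ha, natDegree_pow, natDegree_X_add_C, mul_one]
      have hMlc : M.leadingCoeff = a := by
        rw [hM, leadingCoeff_mul, leadingCoeff_pow, hmon.leadingCoeff, leadingCoeff_C]
        ring
      obtain ⟨p, q, h1, h2, h3⟩ := ih (P - M) (key M hMdeg hMlc)
      refine ⟨p + M, q, ?_, ?_, h3⟩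
      · rw [add_right_comm, ← h1]; ring
      · have h12 : (C (1/2) : ℝ[X]) + C (1/2) = 1 := by
          rw [← C_add]; norm_num
        have hc : ((X : ℝ[X]) + C (1/2)).comp (-1 - X) = -(X + C (1/2)) := by
          simp only [add_comp, X_comp, C_comp]
          linear_combination h12
        rw [add_comp, hM, mul_comp, C_comp, pow_comp, hc, ho.neg_pow]
        ring_nf
        rw [add_comm] at h2
        linear_combination h2

theorem decomposition_exists_unique (P : Polynomial ℝ) :
    ∃! pq : Polynomial ℝ × Polynomial ℝ,
      P = pq.1 + pq.2 ∧
      pq.1 + pq.1.comp (-1 - Polynomial.X) = 0 ∧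
      pq.2.comp (-Polynomial.X) = pq.2 := by
  obtain ⟨p, q, h1, h2, h3⟩ := exists_decomp P.natDegree P le_rfl
  refine ⟨(p, q), ⟨h1, h2, h3⟩, ?_⟩
  rintro ⟨p', q'⟩ ⟨h1', h2', h3'⟩
  simp only at h1' h2' h3' ⊢
  set r : ℝ[X] := p' - p with hr
  have hsum : p + q = p' + q' := h1.symm.trans h1'
  have hrq : r = q - q' := by rw [hr]; linear_combination -hsum
  have hA : r.comp (-1 - X) = -r := by
    rw [hr, sub_comp]; linear_combination h2' - h2
  have hB : r.comp (-X) = r := by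
    rw [hrq, sub_comp, h3, h3']
  have hC : r.comp (X + C 1) = -r := by
    have h4 := congrArg (fun s => s.comp (-X - 1)) hB
    simp only [comp_assoc] at h4
    have h5 : ((-X : ℝ[X]).comp (-X - 1)) = X + C 1 := by
      simp [neg_comp, X_comp]; ring
    rw [h5] at h4
    rw [h4, show (-X - 1 : ℝ[X]) = -1 - X by ring, hA]
  have hr0 : r = 0 := by
    by_contra hne
    have hl := congrArg leadingCoeff hC
    rw [leadingCoeff_comp (by rw [natDegree_X_add_C]; exact one_ne_zero),
      leadingCoeff_neg, (monic_X_add_C (1:ℝ)).leadingCoeff, one_pow, mul_one] at hl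
    exact hne (leadingCoeff_eq_zero.mp (by linarith))
  have hp : p' = p := by
    have : p' - p = 0 := hr0
    linear_combination this
  have hq : q' = q := by
    have : q - q' = 0 := hrq ▸ hr0
    linear_combination -this
  rw [hp, hq]
end

section
/- For every even integer k ≥ 2, ∑_{n=1}^{k} (4^n - 2^n) B_n / (n! · (k-n)!) = 0. -/
open Finset PowerSeries

noncomputable section AuxBern

local notation "E" => PowerSeries.exp ℚ
local notation "B" => bernoulliPowerSeries ℚ

lemma aux_h4 : rescale (4:ℚ) B * (E^4 - 1) = C (R := ℚ) 4 * X := by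
  have hB := bernoulliPowerSeries_mul_exp_sub_one ℚ
  have h := congrArg (rescale (4:ℚ)) hB
  rw [map_mul, map_sub, map_one, rescale_X] at h
  rw [exp_pow_eq_rescale_exp]
  norm_num at h ⊢
  exact h

lemma aux_h2 : rescale (2:ℚ) B * (E^2 - 1) = C (R := ℚ) 2 * X := by
  have hB := bernoulliPowerSeries_mul_exp_sub_one ℚ
  have h := congrArg (rescale (2:ℚ)) hB
  rw [map_mul, map_sub, map_one, rescale_X] at h
  rw [exp_pow_eq_rescale_exp]
  norm_num at h ⊢
  exact h

lemma aux_key :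
    ((rescale (4:ℚ) B - rescale (2:ℚ) B) * E) * (E^4 - 1)
      = -(C (R := ℚ) 2 * X * E * (E^2 - 1)) := by
  have h4 := aux_h4
  have h2 := aux_h2
  have hC : (C (R := ℚ) 4 : ℚ⟦X⟧) = 2 * C (R := ℚ) 2 := by
    rw [show (4:ℚ) = 2 * 2 by norm_num, map_mul]
    norm_num
    rw [show ((2:ℚ⟦X⟧)) = C (R := ℚ) 2 from (map_ofNat (C (R := ℚ)) 2).symm]
  linear_combination (E * h4 - E * (E^2+1) * h2 + E * X * hC)

end AuxBern

noncomputable section Aux2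
local notation "E" => PowerSeries.exp ℚ
local notation "B" => bernoulliPowerSeries ℚ
local notation "N" => PowerSeries.evalNegHom (A := ℚ)

lemma aux_evalNegHom_C (a : ℚ) : N (C (R := ℚ) a) = C (R := ℚ) a := by
  show rescale (-1 : ℚ) (C (R := ℚ) a) = C (R := ℚ) a
  ext n
  simp only [coeff_rescale, PowerSeries.coeff_C]
  split_ifs with h <;> simp [h]

lemma aux_GN : (rescale (4:ℚ) B - rescale (2:ℚ) B) * E
      + N ((rescale (4:ℚ) B - rescale (2:ℚ) B) * E) = 0 := by
  have hkey := aux_key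
  have hE : E * N E = 1 := exp_mul_exp_neg_eq_one
  have hNkey : N ((rescale (4:ℚ) B - rescale (2:ℚ) B) * E) * ((N E)^4 - 1)
      = C (R := ℚ) 2 * X * (N E) * ((N E)^2 - 1) := by
    have h := congrArg N aux_key
    simp only [map_neg, map_mul, map_sub, map_one, map_pow,
      PowerSeries.evalNegHom_X, aux_evalNegHom_C] at h
    simp only [map_mul, map_sub]
    linear_combination h
  set G := (rescale (4:ℚ) B - rescale (2:ℚ) B) * E with hG
  set NG := N G with hNG
  set NE := N E with hNE
  have h3 : NG * (E^4-1) = C (R := ℚ) 2*X*E^3 - C (R := ℚ) 2*X*E := by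
    linear_combination (-(E^4)) * hNkey +
      (NG*(E^3*NE^3+E^2*NE^2+E*NE+1) - C (R := ℚ) 2*X*(E^3*NE^2+E^2*NE-E^3+E)) * hE
  have hsum : (G + NG) * (E^4 - 1) = 0 * (E^4 - 1) := by
    linear_combination hkey + h3
  have hne : (E^4 - 1 : ℚ⟦X⟧) ≠ 0 := by
    intro h
    have := congrArg (PowerSeries.coeff (R := ℚ) 1) h
    rw [exp_pow_eq_rescale_exp] at this
    simp [coeff_rescale, PowerSeries.coeff_exp, PowerSeries.coeff_one] at this
  have := mul_right_cancel₀ hne hsum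
  simpa using this


lemma aux_coeff (k : ℕ) (hke : Even k) :
    ∑ i ∈ Finset.range (k+1),
      ((4:ℚ)^i - 2^i) * (bernoulli i / i.factorial) * (1 / (k-i).factorial) = 0 := by
  have h := congrArg (PowerSeries.coeff (R := ℚ) k) aux_GN
  have hN : PowerSeries.coeff (R := ℚ) k (N ((rescale (4:ℚ) B - rescale (2:ℚ) B) * E))
      = PowerSeries.coeff (R := ℚ) k ((rescale (4:ℚ) B - rescale (2:ℚ) B) * E) := by
    show PowerSeries.coeff (R := ℚ) k (rescale (-1:ℚ) _) = _
    rw [coeff_rescale, hke.neg_one_pow, one_mul]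
  rw [map_add, map_zero, hN, ← two_mul, mul_eq_zero] at h
  have h0 : PowerSeries.coeff (R := ℚ) k ((rescale (4:ℚ) B - rescale (2:ℚ) B) * E) = 0 := by
    rcases h with h | h
    · norm_num at h
    · exact h
  rw [PowerSeries.coeff_mul, Nat.sum_antidiagonal_eq_sum_range_succ_mk] at h0
  rw [← h0]
  refine Finset.sum_congr rfl fun i hi => ?_
  simp only [map_sub, coeff_rescale, bernoulliPowerSeries, PowerSeries.coeff_mk,
    PowerSeries.coeff_exp, Algebra.algebraMap_self, RingHom.id_apply]
  ring

end Aux2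

theorem bernoulli_sum_vanishes (k : ℕ) (hk2 : 2 ≤ k) (hke : Even k) :
    ∑ n ∈ Finset.Icc 1 k,
      ((4 : ℝ) ^ n - 2 ^ n) * ((bernoulli n : ℚ) : ℝ) /
        ((n.factorial : ℝ) * ((k - n).factorial : ℝ)) = 0 := by
  have hQ : ∑ n ∈ Finset.Icc 1 k,
      ((4:ℚ)^n - 2^n) * bernoulli n / (n.factorial * (k-n).factorial) = 0 := by
    have h0 := aux_coeff k hke
    have hr : Finset.range (k+1) = insert 0 (Finset.Icc 1 k) := by
      ext x; simp [Nat.lt_succ_iff]; omega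
    rw [hr, Finset.sum_insert (by simp)] at h0
    simp only [pow_zero, sub_self, zero_mul, zero_add] at h0
    rw [← h0]
    refine Finset.sum_congr rfl fun n hn => ?_
    ring
  calc ∑ n ∈ Finset.Icc 1 k,
      ((4 : ℝ) ^ n - 2 ^ n) * ((bernoulli n : ℚ) : ℝ) /
        ((n.factorial : ℝ) * ((k - n).factorial : ℝ))
      = ((∑ n ∈ Finset.Icc 1 k,
          ((4:ℚ)^n - 2^n) * bernoulli n / (n.factorial * (k-n).factorial) : ℚ) : ℝ) := by
        rw [Rat.cast_sum]
        refine Finset.sum_congr rfl fun n hn => ?_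
        push_cast
        ring
    _ = 0 := by rw [hQ]; norm_num
end

section
/- In the ring of formal power series ℚ[[X]], the identity (∑_{n≥0} ((4^n - 2^n) B_n / n!) X^n) · exp(X) · cosh(X) = -X holds, where cosh(X) denotes the formal power series ∑_{k≥0} X^{2k}/(2k)! and exp(X) = ∑_{n≥0} X^n/n!. -/
open PowerSeries

/-- The formal power series `cosh X = ∑ X^{2k} / (2k)!` over `ℚ`. -/
noncomputable def coshPS : PowerSeries ℚ :=
  PowerSeries.mk fun n => if Even n then (1 : ℚ) / n.factorial else 0

theorem bernoulli_series_mul_exp_mul_cosh :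
    (PowerSeries.mk fun n => ((4 : ℚ) ^ n - 2 ^ n) * bernoulli n / n.factorial) *
        PowerSeries.exp ℚ * coshPS = -PowerSeries.X := by
  set B := bernoulliPowerSeries ℚ with hBdef
  set E := PowerSeries.exp ℚ with hEdef
  set G := rescale (2 : ℚ) E with hGdef
  have hF : (PowerSeries.mk fun n => ((4 : ℚ) ^ n - 2 ^ n) * bernoulli n / n.factorial)
      = rescale (4 : ℚ) B - rescale (2 : ℚ) B := by
    ext n
    simp [coeff_rescale, hBdef, bernoulliPowerSeries, sub_mul, sub_div, mul_div_assoc]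
  have hB : B * (E - 1) = X := bernoulliPowerSeries_mul_exp_sub_one ℚ
  have hC2 : (C (2 : ℚ) : ℚ⟦X⟧) = 2 := map_ofNat (C (R := ℚ)) 2
  have h2 : rescale (2 : ℚ) B * (G - 1) = 2 * X := by
    have := congrArg (rescale (2 : ℚ)) hB
    rw [map_mul, map_sub, map_one, rescale_X, hC2] at this
    exact this
  have e2 : E ^ 2 = G := by
    have h := exp_pow_eq_rescale_exp (A := ℚ) 2
    norm_num at h; exact h
  have hG4 : rescale (4 : ℚ) E = G * G := by
    have e4 : E ^ 4 = rescale (4 : ℚ) E := by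
      have h := exp_pow_eq_rescale_exp (A := ℚ) 4
      norm_num at h; exact h
    rw [← e4, ← e2]; ring
  have h4 : rescale (4 : ℚ) B * ((G - 1) * (G + 1)) = 2 * (2 * X) := by
    have := congrArg (rescale (4 : ℚ)) hB
    rw [map_mul, map_sub, map_one, rescale_X, hG4] at this
    calc rescale (4 : ℚ) B * ((G - 1) * (G + 1))
        = rescale (4 : ℚ) B * (G * G - 1) := by ring
      _ = C (4 : ℚ) * X := this
      _ = 2 * (2 * X) := by
          rw [show (C (4 : ℚ) : ℚ⟦X⟧) = 2 * 2 by rw [show (4:ℚ) = 2*2 by norm_num, map_mul, hC2]]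
          ring
  have key : rescale (4 : ℚ) B * (G + 1) = 2 * rescale (2 : ℚ) B := by
    have hGne : G - 1 ≠ 0 := by
      intro h
      have : (PowerSeries.coeff (R := ℚ) 1) (G - 1) = 0 := by rw [h]; simp
      rw [map_sub, hGdef, coeff_rescale, coeff_exp] at this
      simp at this
    have hz : (rescale (4 : ℚ) B * (G + 1) - 2 * rescale (2 : ℚ) B) * (G - 1) = 0 := by
      have : rescale (4 : ℚ) B * (G + 1) * (G - 1)
          = rescale (4 : ℚ) B * ((G - 1) * (G + 1)) := by ring
      rw [sub_mul, this, h4, mul_assoc, h2]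
      ring
    rcases mul_eq_zero.mp hz with h | h
    · exact sub_eq_zero.mp h
    · exact absurd h hGne
  have hEneg : E * rescale (-1 : ℚ) E = 1 := exp_mul_exp_neg_eq_one
  have h2c : (2 : ℚ⟦X⟧) * coshPS = E + rescale (-1 : ℚ) E := by
    rw [← hC2]
    ext n
    rcases Nat.even_or_odd n with h | h
    · simp [coshPS, coeff_rescale, coeff_exp, h, h.neg_one_pow, hEdef]
      ring
    · simp [coshPS, coeff_rescale, coeff_exp, Nat.not_even_iff_odd.mpr h, h.neg_one_pow, hEdef]
  have hEcosh : (2 : ℚ⟦X⟧) * (E * coshPS) = G + 1 := by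
    rw [mul_left_comm, h2c, mul_add, hEneg, ← e2]; ring
  have h2ne : (2 : ℚ⟦X⟧) ≠ 0 := by
    intro h
    have := congrArg (constantCoeff (R := ℚ)) h
    rw [map_ofNat, map_zero] at this
    norm_num at this
  rw [hF]
  apply mul_left_cancel₀ h2ne
  linear_combination (rescale (4:ℚ) B - rescale (2:ℚ) B) * hEcosh + key - h2
end
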